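/- arXiv:2502.21222 — 5 statements merged into one kernel-verified Lean document; each statement's English description precedes it below -/
import Mathlib

section
/- Let s = −k r/(|r| H) be the projection of r onto the fall circle of radius −k/H, and let n = p × L where L = r × p. Then the orthogonal reflection t of s in the line through r with direction p (whose normal direction within the orbital plane is n) satisfies t = s − 2((s − r)·n) n/|n|² = K/(μH), where K = p × L − kμ r/|r| is the Lenz vector. -/
open RealInnerProductSpace
noncomputable def cross3 (a b : EuclideanSpace ℝ (Fin 3)) : EuclideanSpace ℝ (Fin 3) :=
  WithLp.toLp 2 ![a 1 * b 2 - a 2 * b 1, a 2 * b 0 - a 0 * b 2, a 0 * b 1 - a 1 * b 0]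

/-!
With `L = r × p` and `n = p × L`, the cyclic symmetry of the triple product gives
`⟪r, n⟫ = ⟪L, r × p⟫ = ‖L‖²`, and Lagrange's identity with `p ⊥ L` gives `‖n‖² = ‖p‖² ‖L‖²`.
Since `s - r` is a multiple of `r`, the reflection coefficient `2⟪s - r, n⟫ / ‖n‖²` is then a
scalar in `‖r‖, ‖p‖, k, H`, which the energy relation `2μ (‖r‖ H + k) = ‖r‖ ‖p‖²` turns into
`-(μ H)⁻¹`, matching the `n`-component of `K / (μ H)`; the `r`-components agree outright.
-/

open Matrix

theorem cross3_eq_toLp_crossProduct (a b : EuclideanSpace ℝ (Fin 3)) :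
    cross3 a b = WithLp.toLp 2 (a.ofLp ⨯₃ b.ofLp) := by
  rw [cross3, cross_apply]

theorem real_inner_eq_dotProduct {ι : Type*} [Fintype ι] (a b : EuclideanSpace ℝ ι) :
    ⟪a, b⟫ = a.ofLp ⬝ᵥ b.ofLp := by
  rw [EuclideanSpace.inner_eq_star_dotProduct, star_trivial, dotProduct_comm]

theorem inner_cross3_self (a b : EuclideanSpace ℝ (Fin 3)) : ⟪b, cross3 a b⟫ = 0 := by
  rw [cross3_eq_toLp_crossProduct, real_inner_eq_dotProduct]
  exact dot_cross_self _ _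

theorem inner_cross3_permutation (a b c : EuclideanSpace ℝ (Fin 3)) :
    ⟪a, cross3 b c⟫ = ⟪b, cross3 c a⟫ := by
  simp only [cross3_eq_toLp_crossProduct, real_inner_eq_dotProduct]
  exact triple_product_permutation _ _ _

theorem inner_cross3_cross3 (a b c d : EuclideanSpace ℝ (Fin 3)) :
    ⟪cross3 a b, cross3 c d⟫ = ⟪a, c⟫ * ⟪b, d⟫ - ⟪a, d⟫ * ⟪b, c⟫ := by
  simp only [cross3_eq_toLp_crossProduct, real_inner_eq_dotProduct]
  exact cross_dot_cross _ _ _ _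

theorem norm_cross3_sq (a b : EuclideanSpace ℝ (Fin 3)) :
    ‖cross3 a b‖ ^ 2 = ‖a‖ ^ 2 * ‖b‖ ^ 2 - ⟪a, b⟫ ^ 2 := by
  rw [← real_inner_self_eq_norm_sq, inner_cross3_cross3, real_inner_self_eq_norm_sq,
    real_inner_self_eq_norm_sq, real_inner_comm b a]
  ring

theorem inner_cross3_cross3_self (a b : EuclideanSpace ℝ (Fin 3)) :
    ⟪a, cross3 b (cross3 a b)⟫ = ‖cross3 a b‖ ^ 2 := by
  rw [inner_cross3_permutation, inner_cross3_permutation, real_inner_self_eq_norm_sq]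

theorem norm_cross3_cross3_self_sq (a b : EuclideanSpace ℝ (Fin 3)) :
    ‖cross3 b (cross3 a b)‖ ^ 2 = ‖b‖ ^ 2 * ‖cross3 a b‖ ^ 2 := by
  rw [norm_cross3_sq, inner_cross3_self]
  ring

theorem reflection_is_lenz_vector_general
    (r p : EuclideanSpace ℝ (Fin 3)) (μ k H : ℝ)
    (hr : r ≠ 0) (hp : p ≠ 0) (hμ : 0 < μ)
    (L : EuclideanSpace ℝ (Fin 3)) (hL : L = cross3 r p) (hLne : L ≠ 0)
    (hH : H = ‖p‖ ^ 2 / (2 * μ) - k / ‖r‖) (hHneg : H < 0)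
    (s n K : EuclideanSpace ℝ (Fin 3))
    (hs : s = (-(k / (‖r‖ * H))) • r)
    (hn : n = cross3 p L)
    (hK : K = cross3 p L - ((k * μ) / ‖r‖) • r) :
    s - ((2 * ⟪s - r, n⟫) / ‖n‖ ^ 2) • n = (μ * H)⁻¹ • K := by
  have hr' : ‖r‖ ≠ 0 := norm_ne_zero_iff.mpr hr
  have hp' : ‖p‖ ≠ 0 := norm_ne_zero_iff.mpr hp
  have hL' : ‖L‖ ≠ 0 := norm_ne_zero_iff.mpr hLne
  have hrn : ⟪r, n⟫ = ‖L‖ ^ 2 := by rw [hn, hL, inner_cross3_cross3_self]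
  have hnn : ‖n‖ ^ 2 = ‖p‖ ^ 2 * ‖L‖ ^ 2 := by rw [hn, hL, norm_cross3_cross3_self_sq]
  have hsr : s - r = (-(k / (‖r‖ * H)) - 1) • r := by rw [hs, sub_smul, one_smul]
  have energy : 2 * μ * (‖r‖ * H + k) = ‖r‖ * ‖p‖ ^ 2 := by
    rw [hH]
    field_simp
    ring
  rw [hsr, real_inner_smul_left, hrn, hnn, hs, hK, ← hn]
  match_scalars
  · field_simp [hHneg.ne]
  · field_simp [hHneg.ne]
    linear_combination energy

/-- The reflection of s = −k r/(|r|H) in the tangent line (with in-plane normal n = p × L)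
equals K/(μH), with K the Lenz vector. -/
theorem reflection_is_lenz_vector
    (r p : EuclideanSpace ℝ (Fin 3)) (μ k H : ℝ)
    (hr : r ≠ 0) (hp : p ≠ 0) (hμ : 0 < μ) (hk : 0 < k)
    (L : EuclideanSpace ℝ (Fin 3)) (hL : L = cross3 r p) (hLne : L ≠ 0)
    (hH : H = ‖p‖ ^ 2 / (2 * μ) - k / ‖r‖) (hHneg : H < 0)
    (s n K : EuclideanSpace ℝ (Fin 3))
    (hs : s = (-(k / (‖r‖ * H))) • r)
    (hn : n = cross3 p L)
    (hK : K = cross3 p L - ((k * μ) / ‖r‖) • r) :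
    s - ((2 * ⟪s - r, n⟫) / ‖n‖ ^ 2) • n = (μ * H)⁻¹ • K :=
  reflection_is_lenz_vector_general r p μ k H hr hp hμ L hL hLne hH hHneg s n K hs hn hK
end

section
/- With t = K/(μH), the sum of distances |t − r| + |r| equals −k/H. Hence every point r on a Kepler orbit with energy H < 0, angular momentum L ≠ 0, and Lenz vector K lies on the ellipse with foci 0 and K/(μH) and major axis 2a = −k/H. -/
open RealInnerProductSpace
/-! By the vector triple product, `K - μH r = (‖p‖²/2) r - ⟪r, p⟫ p`, and expanding the square
shows that this vector has norm `‖p‖² ‖r‖ / 2`: the `⟪r, p⟫²` terms cancel. Since `μH < 0`,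
`‖t - r‖ = ‖p‖² ‖r‖ / (-2μH)`, and adding `‖r‖` gives `-k/H` by the energy equation
`2μH ‖r‖ = ‖p‖² ‖r‖ - 2kμ`. -/

theorem cross3_cross3 (u v w : EuclideanSpace ℝ (Fin 3)) :
    cross3 u (cross3 v w) = ⟪u, w⟫ • v - ⟪u, v⟫ • w := by
  ext i
  fin_cases i <;>
    · simp only [cross3, Fin.isValue, Matrix.cons_val, Matrix.cons_val_one, Matrix.cons_val_zero,
        Fin.zero_eta, Fin.mk_one, Fin.reduceFinMk, PiLp.inner_apply, RCLike.inner_apply,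
        Real.ringHom_apply, Fin.sum_univ_three, PiLp.sub_apply, PiLp.smul_apply, smul_eq_mul]
      ring

section Kepler

variable {E : Type*} [NormedAddCommGroup E] [InnerProductSpace ℝ E]

theorem norm_half_normSq_smul_sub_inner_smul (x y : E) :
    ‖(‖y‖ ^ 2 / 2) • x - ⟪x, y⟫ • y‖ = ‖y‖ ^ 2 * ‖x‖ / 2 := by
  refine (sq_eq_sq₀ (norm_nonneg _) (by positivity)).mp ?_
  rw [norm_sub_sq_real, norm_smul, norm_smul, real_inner_smul_left, real_inner_smul_right,
    Real.norm_eq_abs, Real.norm_eq_abs, abs_of_nonneg (by positivity : (0 : ℝ) ≤ ‖y‖ ^ 2 / 2)]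
  ring_nf
  rw [sq_abs]
  ring

noncomputable def keplerEnergy (μ k : ℝ) (r p : E) : ℝ := ‖p‖ ^ 2 / (2 * μ) - k / ‖r‖

/-- The Lenz vector `p × L - kμ r/‖r‖`, with `p × (r × p)` expanded by the vector triple product
so that it makes sense in any real inner product space. -/
noncomputable def lenzVector (μ k : ℝ) (r p : E) : E :=
  ‖p‖ ^ 2 • r - ⟪r, p⟫ • p - (k * μ / ‖r‖) • r

theorem lenzVector_sub_smul {μ : ℝ} (hμ : μ ≠ 0) (k : ℝ) (r p : E) :
    lenzVector μ k r p - (μ * keplerEnergy μ k r p) • r = (‖p‖ ^ 2 / 2) • r - ⟪r, p⟫ • p := by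
  have : μ * keplerEnergy μ k r p = ‖p‖ ^ 2 / 2 - k * μ / ‖r‖ := by
    unfold keplerEnergy; field_simp
  rw [this, lenzVector]
  module

theorem norm_inv_smul_lenzVector_sub_add_norm {μ k : ℝ} {r p : E} (hr : r ≠ 0) (hμ : 0 < μ)
    (hH : keplerEnergy μ k r p < 0) :
    ‖(μ * keplerEnergy μ k r p)⁻¹ • lenzVector μ k r p - r‖ + ‖r‖ = -k / keplerEnergy μ k r p := by
  set H := keplerEnergy μ k r p with hH_def
  have hμH : μ * H < 0 := mul_neg_of_pos_of_neg hμ hH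
  have hfocus : (μ * H)⁻¹ • lenzVector μ k r p - r
      = (μ * H)⁻¹ • ((‖p‖ ^ 2 / 2) • r - ⟪r, p⟫ • p) := by
    rw [← lenzVector_sub_smul hμ.ne', smul_sub, smul_smul, inv_mul_cancel₀ hμH.ne, one_smul]
  have henergy : 2 * (μ * H) * ‖r‖ = ‖p‖ ^ 2 * ‖r‖ - 2 * k * μ := by
    rw [hH_def, keplerEnergy]
    field_simp [norm_ne_zero_iff.mpr hr]
  rw [hfocus, norm_smul, norm_half_normSq_smul_sub_inner_smul, norm_inv, Real.norm_eq_abs,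
    abs_of_neg hμH]
  field_simp [hH.ne]
  linear_combination henergy

end Kepler

theorem orbit_point_on_ellipse_general
    (r p : EuclideanSpace ℝ (Fin 3)) (μ k H : ℝ)
    (hr : r ≠ 0) (hμ : 0 < μ)
    (L : EuclideanSpace ℝ (Fin 3)) (hL : L = cross3 r p)
    (hH : H = ‖p‖ ^ 2 / (2 * μ) - k / ‖r‖) (hHneg : H < 0)
    (K t : EuclideanSpace ℝ (Fin 3))
    (hK : K = cross3 p L - ((k * μ) / ‖r‖) • r)
    (ht : t = (μ * H)⁻¹ • K) :
    ‖t - r‖ + ‖r‖ = -k / H := by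
  have hKlenz : K = lenzVector μ k r p := by
    rw [hK, hL, cross3_cross3, real_inner_self_eq_norm_sq, real_inner_comm, lenzVector]
  have hHkepler : H = keplerEnergy μ k r p := hH
  subst hHkepler
  rw [ht, hKlenz]
  exact norm_inv_smul_lenzVector_sub_add_norm hr hμ hHneg

/-- With t = K/(μH), |t − r| + |r| = −k/H, so r lies on the ellipse with foci 0 and
K/(μH) and major axis 2a = −k/H. -/
theorem orbit_point_on_ellipse
    (r p : EuclideanSpace ℝ (Fin 3)) (μ k H : ℝ)
    (hr : r ≠ 0) (hμ : 0 < μ) (hk : 0 < k)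
    (L : EuclideanSpace ℝ (Fin 3)) (hL : L = cross3 r p) (hLne : L ≠ 0)
    (hH : H = ‖p‖ ^ 2 / (2 * μ) - k / ‖r‖) (hHneg : H < 0)
    (K t : EuclideanSpace ℝ (Fin 3))
    (hK : K = cross3 p L - ((k * μ) / ‖r‖) • r)
    (ht : t = (μ * H)⁻¹ • K) :
    ‖t - r‖ + ‖r‖ = -k / H :=
  orbit_point_on_ellipse_general r p μ k H hr hμ L hL hH hHneg K t hK ht
end

section
/- If q lies on a Kepler ellipse with foci 0 and t, major axis 2a = −k/H, and the ellipse passes through a fixed point r (so |t − r| = 2a − |r|), then |q| + |q − r| ≤ 4a − |r|. Thus the region swept out by all Kepler ellipses with energy H through r is contained in the ellipse with foci 0 and r and major axis 4a − |r|. -/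
open RealInnerProductSpace
theorem swept_region_bounded_general
    (a : ℝ) (r t q : EuclideanSpace ℝ (Fin 3))
    (htr : ‖t - r‖ = 2 * a - ‖r‖)
    (hq : ‖q‖ + ‖q - t‖ = 2 * a) :
    ‖q‖ + ‖q - r‖ ≤ 4 * a - ‖r‖ := by
  linarith [norm_sub_le_norm_sub_add_norm_sub q t r]

/-- Any point q on a Kepler ellipse with foci 0 and t, major axis 2a, passing through r,
satisfies |q| + |q − r| ≤ 4a − |r|. -/
theorem swept_region_bounded
    (a : ℝ) (r t q : EuclideanSpace ℝ (Fin 3))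
    (ha : 0 < a) (hr0 : 0 < ‖r‖) (hr2a : ‖r‖ < 2 * a)
    (htr : ‖t - r‖ = 2 * a - ‖r‖)
    (hq : ‖q‖ + ‖q - t‖ = 2 * a) :
    ‖q‖ + ‖q - r‖ ≤ 4 * a - ‖r‖ :=
  swept_region_bounded_general a r t q htr hq
end

section
/- In the setting of the previous item, for each q with |q| + |q − r| = 4a − |r| (and each r, q in the plane), there exists t with |t − r| = 2a − |r| and |q| + |q − t| = 2a; namely t can be taken on the segment from q to r at distance 2a − |r| from r. Hence the bounding ellipse is attained. -/
open RealInnerProductSpace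
/-!
By the triangle inequality `‖q‖ ≤ ‖q - r‖ + ‖r‖`, the hypothesis forces
`2a - ‖r‖ ≤ ‖q - r‖`, so the point `t` of the segment `[r, q]` at distance `2a - ‖r‖` from `r`
exists, and it lies at distance `‖q - r‖ - (2a - ‖r‖)` from `q`; adding `‖q‖` gives `2a`.
-/

theorem exists_mem_segment_dist_left_eq {E : Type*} [NormedAddCommGroup E] [NormedSpace ℝ E]
    {x y : E} {d : ℝ} (hd₀ : 0 ≤ d) (hd : d ≤ dist x y) :
    ∃ t ∈ segment ℝ x y, dist t x = d ∧ dist y t = dist x y - d := by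
  rcases eq_or_ne x y with rfl | hxy
  · obtain rfl : d = 0 := le_antisymm (by simpa using hd) hd₀
    exact ⟨x, left_mem_segment ℝ x x, by simp⟩
  have hD : 0 < dist x y := dist_pos.mpr hxy
  set c := d / dist x y
  have hc₀ : 0 ≤ c := div_nonneg hd₀ hD.le
  have hc₁ : c ≤ 1 := (div_le_one hD).mpr hd
  refine ⟨AffineMap.lineMap x y c, ?_, ?_, ?_⟩
  · rw [segment_eq_image_lineMap]
    exact Set.mem_image_of_mem _ ⟨hc₀, hc₁⟩
  · rw [dist_lineMap_left, Real.norm_of_nonneg hc₀, div_mul_cancel₀ _ hD.ne']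
  · rw [dist_comm, dist_lineMap_right, Real.norm_of_nonneg (sub_nonneg.mpr hc₁), sub_mul,
      one_mul, div_mul_cancel₀ _ hD.ne']

theorem bounding_ellipse_attained_general
    (a : ℝ) (r q : EuclideanSpace ℝ (Fin 3))
    (hr2a : ‖r‖ < 2 * a)
    (hq : ‖q‖ + ‖q - r‖ = 4 * a - ‖r‖) :
    ∃ t : EuclideanSpace ℝ (Fin 3), t ∈ segment ℝ r q ∧ ‖t - r‖ = 2 * a - ‖r‖ ∧
      ‖q‖ + ‖q - t‖ = 2 * a := by
  have htri : ‖q‖ ≤ ‖q - r‖ + ‖r‖ := norm_le_norm_sub_add q r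
  obtain ⟨t, hseg, htr, hqt⟩ :=
    exists_mem_segment_dist_left_eq (x := r) (y := q) (d := 2 * a - ‖r‖) (by linarith)
      (by rw [dist_comm, dist_eq_norm]; linarith)
  rw [dist_eq_norm] at htr
  rw [dist_eq_norm, dist_comm, dist_eq_norm] at hqt
  exact ⟨t, hseg, htr, by linarith⟩

/-- The bounding ellipse is attained: if |q| + |q − r| = 4a − |r| then there is a focus t
on the segment from r to q with |t − r| = 2a − |r| and |q| + |q − t| = 2a. -/
theorem bounding_ellipse_attained
    (a : ℝ) (r q : EuclideanSpace ℝ (Fin 3))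
    (ha : 0 < a) (hr0 : 0 < ‖r‖) (hr2a : ‖r‖ < 2 * a)
    (hqr : q ≠ r)
    (hq : ‖q‖ + ‖q - r‖ = 4 * a - ‖r‖) :
    ∃ t : EuclideanSpace ℝ (Fin 3), t ∈ segment ℝ r q ∧ ‖t - r‖ = 2 * a - ‖r‖ ∧
      ‖q‖ + ‖q - t‖ = 2 * a :=
  bounding_ellipse_attained_general a r q hr2a hq
end

section
/- The distance from the orbit point r to the directrix D = {d + w : w · K = 0}, where d = |L|² K/|K|², equals |r|/e with e = |K|/(kμ). Explicitly, (d − r)·K/|K| = kμ|r|/|K|. -/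
open RealInnerProductSpace
/-! The identity `r · K = |L|² − kμ|r|` comes from the cyclic symmetry of the triple product,
`r · (p × L) = (r × p) · L = |L|²`. Since `d · K = |L|²`, this leaves `(d − r) · K = kμ|r|`. -/

lemma cross3_eq_crossProduct (a b : EuclideanSpace ℝ (Fin 3)) :
    cross3 a b = WithLp.toLp 2 (crossProduct a.ofLp b.ofLp) :=
  rfl

lemma inner_cross3_right (a b c : EuclideanSpace ℝ (Fin 3)) :
    ⟪a, cross3 b c⟫ = ⟪cross3 a b, c⟫ := by
  simp only [cross3_eq_crossProduct, EuclideanSpace.inner_eq_star_dotProduct, star_trivial]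
  rw [dotProduct_comm, triple_product_permutation, triple_product_permutation]

lemma inner_self_cross3_cross3 (r p : EuclideanSpace ℝ (Fin 3)) :
    ⟪r, cross3 p (cross3 r p)⟫ = ‖cross3 r p‖ ^ 2 := by
  rw [inner_cross3_right, real_inner_self_eq_norm_sq]

lemma inner_div_norm_smul_self {E : Type*} [NormedAddCommGroup E] [InnerProductSpace ℝ E]
    (c : ℝ) (r : E) : ⟪r, (c / ‖r‖) • r⟫ = c * ‖r‖ := by
  rcases eq_or_ne r 0 with rfl | hr
  · simp
  · rw [real_inner_smul_right, real_inner_self_eq_norm_sq]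
    field_simp

lemma inner_div_normSq_smul_left {E : Type*} [NormedAddCommGroup E] [InnerProductSpace ℝ E]
    (c : ℝ) {K : E} (hK : K ≠ 0) : ⟪(c / ‖K‖ ^ 2) • K, K⟫ = c := by
  rw [real_inner_smul_left, real_inner_self_eq_norm_sq]
  field_simp [norm_ne_zero_iff.mpr hK]

lemma inner_self_rungeLenz (r p : EuclideanSpace ℝ (Fin 3)) (c : ℝ) :
    ⟪r, cross3 p (cross3 r p) - (c / ‖r‖) • r⟫ = ‖cross3 r p‖ ^ 2 - c * ‖r‖ := by
  rw [inner_sub_right, inner_self_cross3_cross3, inner_div_norm_smul_self]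

theorem distance_to_directrix_general
    (r p : EuclideanSpace ℝ (Fin 3)) (μ k : ℝ)
    (L : EuclideanSpace ℝ (Fin 3)) (hL : L = cross3 r p)
    (K d : EuclideanSpace ℝ (Fin 3))
    (hK : K = cross3 p L - ((k * μ) / ‖r‖) • r) (hKne : K ≠ 0)
    (hd : d = (‖L‖ ^ 2 / ‖K‖ ^ 2) • K) :
    ⟪d - r, K⟫ / ‖K‖ = k * μ * ‖r‖ / ‖K‖ := by
  have hdK : ⟪d, K⟫ = ‖L‖ ^ 2 := hd ▸ inner_div_normSq_smul_left _ hKne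
  have hrK : ⟪r, K⟫ = ‖L‖ ^ 2 - k * μ * ‖r‖ := by
    rw [hK, hL, inner_self_rungeLenz]
  rw [inner_sub_left, hdK, hrK, sub_sub_cancel]

/-- The distance from r to the directrix D = d + K^⊥, d = |L|²K/|K|², equals |r|/e with
e = |K|/(kμ): explicitly (d − r)·K/|K| = kμ|r|/|K|. -/
theorem distance_to_directrix
    (r p : EuclideanSpace ℝ (Fin 3)) (μ k : ℝ)
    (hr : r ≠ 0) (hμ : 0 < μ) (hk : 0 < k)
    (L : EuclideanSpace ℝ (Fin 3)) (hL : L = cross3 r p) (hLne : L ≠ 0)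
    (K d : EuclideanSpace ℝ (Fin 3))
    (hK : K = cross3 p L - ((k * μ) / ‖r‖) • r) (hKne : K ≠ 0)
    (hd : d = (‖L‖ ^ 2 / ‖K‖ ^ 2) • K) :
    ⟪d - r, K⟫ / ‖K‖ = k * μ * ‖r‖ / ‖K‖ :=
  distance_to_directrix_general r p μ k L hL K d hK hKne hd
end
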